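/- arXiv:2302.03801 — 7 statements merged into one kernel-verified Lean document; each statement's English description precedes it below -/
import Mathlib

section
/- Let (X,σ) be a metric space with a geodesic bicombing that is (p,k)-uniformly convex for some p ∈ (1,∞) and k ∈ (0,1). Then X is weakly B2: for every C > 0 there exists N > 0 such that whenever x,y,z ∈ X satisfy d(x,y) ≤ N, d(x,z) ≤ N, and d(y,z) > N, one has d(x, σ_{yz}(1/2)) < N − C. Moreover one can take any N with (1−k)^{1/p} < 1 − C/N. -/
open Set

theorem stmt_2 {X : Type*} [MetricSpace X] (σ : X → X → ℝ → X) (p k : ℝ)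
    (hp : 1 < p) (hk0 : 0 < k) (hk1 : k < 1)
    (h0 : ∀ x y, σ x y 0 = x) (h1 : ∀ x y, σ x y 1 = y)
    (hgeo : ∀ x y : X, ∀ s ∈ Icc (0:ℝ) 1, ∀ t ∈ Icc (0:ℝ) 1,
      dist (σ x y s) (σ x y t) = |s - t| * dist x y)
    (huc : ∀ x y z : X, dist x (σ y z (1/2)) ^ p ≤
      (1/2) * dist x y ^ p + (1/2) * dist x z ^ p - k * dist y z ^ p) :
    ∀ C : ℝ, 0 < C → ∃ N : ℝ, 0 < N ∧ (1 - k) ^ (1/p) < 1 - C / N ∧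
      ∀ x y z : X, dist x y ≤ N → dist x z ≤ N → N < dist y z →
        dist x (σ y z (1/2)) < N - C := by
  intro C hC
  have hp0 : 0 < p := lt_trans one_pos hp
  set a : ℝ := (1 - k) ^ (1/p) with ha
  have h1k0 : 0 < 1 - k := by linarith
  have ha0 : 0 < a := Real.rpow_pos_of_pos h1k0 _
  have ha1 : a < 1 := by
    apply Real.rpow_lt_one (le_of_lt h1k0) (by linarith) (by positivity)
  set N : ℝ := 2 * C / (1 - a) with hN
  have hN0 : 0 < N := by
    apply div_pos (by linarith) (by linarith)
  have hCN : C / N = (1 - a) / 2 := by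
    rw [hN]
    field_simp
  refine ⟨N, hN0, ?_, ?_⟩
  · rw [hCN]; linarith
  · intro x y z hxy hxz hyz
    have key : dist x (σ y z (1/2)) ^ p ≤ (1 - k) * N ^ p := by
      have h1 : dist x y ^ p ≤ N ^ p :=
        Real.rpow_le_rpow dist_nonneg hxy hp0.le
      have h2 : dist x z ^ p ≤ N ^ p :=
        Real.rpow_le_rpow dist_nonneg hxz hp0.le
      have h3 : N ^ p ≤ dist y z ^ p :=
        Real.rpow_le_rpow hN0.le hyz.le hp0.le
      have := huc x y z
      nlinarith [this]
    have hd : dist x (σ y z (1/2)) ≤ a * N := by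
      have hnn : (0:ℝ) ≤ dist x (σ y z (1/2)) := dist_nonneg
      have e1 : dist x (σ y z (1/2)) = (dist x (σ y z (1/2)) ^ p) ^ (1/p) := by
        rw [show (1:ℝ)/p = p⁻¹ from one_div p, Real.rpow_rpow_inv hnn hp0.ne']
      rw [e1]
      have e2 : ((1 - k) * N ^ p) ^ (1/p) = a * N := by
        rw [Real.mul_rpow h1k0.le (Real.rpow_nonneg hN0.le _),
          ← Real.rpow_mul hN0.le, mul_one_div, div_self hp0.ne', Real.rpow_one]
      rw [← e2]
      exact Real.rpow_le_rpow (Real.rpow_nonneg hnn _) key (by positivity)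
    have : a * N < N - C := by
      have : C = (1 - a) / 2 * N := by
        rw [← hCN]; field_simp
      nlinarith
    linarith
end

section
/- Let X be a metric space with a convex, consistent geodesic bicombing σ such that homothety-type interpolation along σ holds. If every point of X has a neighbourhood on which (X,σ) is (p,k)-uniformly convex, then (X,σ) is globally (p,k)-uniformly convex: d(x, σ_{yz}(1/2))^p ≤ (1/2)d(x,y)^p + (1/2)d(x,z)^p − k·d(y,z)^p for all x,y,z ∈ X. -/
open Set

theorem stmt_3 {X : Type*} [MetricSpace X] (σ : X → X → ℝ → X) (p k : ℝ)
    (hp : 1 < p) (hk : 0 < k)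
    (h0 : ∀ x y, σ x y 0 = x) (h1 : ∀ x y, σ x y 1 = y)
    (hgeo : ∀ x y : X, ∀ s ∈ Icc (0:ℝ) 1, ∀ t ∈ Icc (0:ℝ) 1,
      dist (σ x y s) (σ x y t) = |s - t| * dist x y)
    (hcons : ∀ x y : X, ∀ s t u : ℝ, 0 ≤ s → s ≤ t → t ≤ 1 → u ∈ Icc (0:ℝ) 1 →
      σ (σ x y s) (σ x y t) u = σ x y ((1 - u) * s + u * t))
    (hconv : ∀ x y x' y' : X,
      ConvexOn ℝ (Icc (0:ℝ) 1) (fun t => dist (σ x y t) (σ x' y' t)))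
    (hloc : ∀ c : X, ∃ U ∈ nhds c, ∀ x ∈ U, ∀ y ∈ U, ∀ z ∈ U,
      (∀ t ∈ Icc (0:ℝ) 1, σ y z t ∈ U) →
      dist x (σ y z (1/2)) ^ p ≤
        (1/2) * dist x y ^ p + (1/2) * dist x z ^ p - k * dist y z ^ p) :
    ∀ x y z : X, dist x (σ y z (1/2)) ^ p ≤
      (1/2) * dist x y ^ p + (1/2) * dist x z ^ p - k * dist y z ^ p := by
  have hp0 : (0:ℝ) ≤ p := by linarith
  -- constant geodesics
  have hconst : ∀ (w : X) (t : ℝ), 0 ≤ t → t ≤ 1 → σ w w t = w := by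
    intro w t ht0 ht1
    have h := hgeo w w t ⟨ht0, ht1⟩ 0 ⟨le_rfl, zero_le_one⟩
    rw [h0 w w, dist_self, mul_zero] at h
    exact dist_eq_zero.mp h
  -- convexity between two geodesics, evaluated against the chord
  have hchord : ∀ (a b a' b' : X) (t : ℝ), 0 ≤ t → t ≤ 1 →
      dist (σ a b t) (σ a' b' t) ≤ (1 - t) * dist a a' + t * dist b b' := by
    intro a b a' b' t ht0 ht1
    have mem0 : (0:ℝ) ∈ Icc (0:ℝ) 1 := ⟨le_rfl, zero_le_one⟩
    have mem1 : (1:ℝ) ∈ Icc (0:ℝ) 1 := ⟨zero_le_one, le_rfl⟩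
    have h := (hconv a b a' b').2 mem0 mem1 (show (0:ℝ) ≤ 1 - t by linarith) ht0
      (by ring)
    simp only [smul_eq_mul, mul_zero, mul_one, zero_add] at h
    rwa [h0, h0, h1, h1] at h
  -- convexity of distance to a fixed point along a geodesic
  have hdist_pt : ∀ (a b w : X) (t : ℝ), 0 ≤ t → t ≤ 1 →
      dist (σ a b t) w ≤ (1 - t) * dist a w + t * dist b w := by
    intro a b w t ht0 ht1
    have h := hchord a b w w t ht0 ht1
    rwa [hconst w t ht0 ht1] at h
  intro x y z
  set m := σ y z (1/2) with hm
  obtain ⟨U, hU, hUloc⟩ := hloc m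
  obtain ⟨r, hr0, hball⟩ := Metric.mem_nhds_iff.mp hU
  obtain ⟨l, hl0, hlhalf, hlx, hlD⟩ : ∃ l : ℝ, 0 < l ∧ l ≤ 1/2 ∧
      l * dist m x < r ∧ l * dist y z < r := by
    have hd1 : (0:ℝ) ≤ dist m x := dist_nonneg
    have hd2 : (0:ℝ) ≤ dist y z := dist_nonneg
    set M := 1 + dist m x + dist y z with hM
    have hM0 : (0:ℝ) < M := by rw [hM]; linarith
    refine ⟨min (1/2) (r / (2 * M)), lt_min (by norm_num) (div_pos hr0 (by linarith)),
      min_le_left _ _, ?_, ?_⟩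
    · have h2 : min (1/2) (r / (2 * M)) ≤ r / (2 * M) := min_le_right _ _
      have h4 : (0:ℝ) ≤ min (1/2) (r / (2 * M)) :=
        le_min (by norm_num) (div_nonneg hr0.le (by linarith))
      have h3 : min (1/2) (r / (2 * M)) * dist m x ≤ (r / (2 * M)) * M := by
        apply mul_le_mul h2 (by rw [hM]; linarith) hd1 (div_nonneg hr0.le (by linarith))
      have heq : (r / (2 * M)) * M = r / 2 := by field_simp
      rw [heq] at h3
      linarith
    · have h2 : min (1/2) (r / (2 * M)) ≤ r / (2 * M) := min_le_right _ _
      have h3 : min (1/2) (r / (2 * M)) * dist y z ≤ (r / (2 * M)) * M := by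
        apply mul_le_mul h2 (by rw [hM]; linarith) hd2 (div_nonneg hr0.le (by linarith))
      have heq : (r / (2 * M)) * M = r / 2 := by field_simp
      rw [heq] at h3
      linarith
  have hl1 : l ≤ 1 := by linarith
  have hD0 : (0:ℝ) ≤ dist y z := dist_nonneg
  -- distances along the base geodesic
  have hgamma : ∀ u v : ℝ, 0 ≤ u → u ≤ 1 → 0 ≤ v → v ≤ 1 →
      dist (σ y z u) (σ y z v) = |u - v| * dist y z :=
    fun u v hu0 hu1 hv0 hv1 => hgeo y z u ⟨hu0, hu1⟩ v ⟨hv0, hv1⟩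
  have hym : dist y m = dist y z / 2 := by
    have h := hgamma 0 (1/2) le_rfl zero_le_one (by norm_num) (by norm_num)
    rw [h0] at h
    rw [← hm] at h
    rw [h, show |(0:ℝ) - 1/2| = 1/2 by norm_num]; ring
  have hmy : dist m y = dist y z / 2 := by rw [dist_comm]; exact hym
  -- the two candidate points near m on the y-side
  set a := σ m y l with ha
  set b := σ y z ((1 - l)/2) with hb
  have hma : dist m a = l * dist y z / 2 := by
    have h := hgeo m y 0 ⟨le_rfl, zero_le_one⟩ l ⟨hl0.le, hl1⟩
    rw [h0, show |(0:ℝ) - l| = l by rw [zero_sub, abs_neg, abs_of_nonneg hl0.le]] at h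
    rw [← ha] at h
    rw [h, hmy]; ring
  have hya : dist y a = (1 - l) * dist y z / 2 := by
    have h := hgeo m y l ⟨hl0.le, hl1⟩ 1 ⟨zero_le_one, le_rfl⟩
    rw [h1, show |l - (1:ℝ)| = 1 - l by rw [abs_of_nonpos (by linarith)]; ring] at h
    rw [← ha] at h
    rw [dist_comm, h, hmy]; ring
  have hmb : dist m b = l * dist y z / 2 := by
    have h := hgamma (1/2) ((1 - l)/2) (by norm_num) (by norm_num)
      (by linarith) (by linarith)
    rw [← hm, ← hb] at h
    rw [h, show |(1:ℝ)/2 - (1 - l)/2| = l/2 by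
      rw [show (1:ℝ)/2 - (1 - l)/2 = l/2 by ring, abs_of_nonneg (by linarith)]]
    ring
  have hyb : dist y b = (1 - l) * dist y z / 2 := by
    have h := hgamma 0 ((1 - l)/2) le_rfl zero_le_one (by linarith) (by linarith)
    rw [h0, ← hb] at h
    rw [h, show |(0:ℝ) - (1 - l)/2| = (1 - l)/2 by
      rw [zero_sub, abs_neg, abs_of_nonneg (by linarith)]]
    ring
  have hmU : m ∈ U := hball (by simp [Metric.mem_ball, hr0])
  have hc_lt : l * dist y z / 2 < r := by
    have : l * dist y z / 2 ≤ l * dist y z := by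
      have : 0 ≤ l * dist y z := mul_nonneg hl0.le hD0
      linarith
    linarith
  have haU : a ∈ U := hball (by
    rw [Metric.mem_ball, dist_comm, hma]; exact hc_lt)
  have hbU : b ∈ U := hball (by
    rw [Metric.mem_ball, dist_comm, hmb]; exact hc_lt)
  have habgeo : ∀ t ∈ Icc (0:ℝ) 1, σ a b t ∈ U := by
    intro t ht
    apply hball
    rw [Metric.mem_ball]
    have h := hdist_pt a b m t ht.1 ht.2
    rw [dist_comm a m, dist_comm b m, hma, hmb] at h
    calc dist (σ a b t) m ≤ (1 - t) * (l * dist y z / 2) + t * (l * dist y z / 2) := h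
      _ = l * dist y z / 2 := by ring
      _ < r := hc_lt
  -- apply local uniform convexity at m with apex m : forces a = b
  have hrev : a = b := by
    have hineq := hUloc m hmU a haU b hbU habgeo
    have hmid_le : dist m (σ a b (1/2)) ≤ l * dist y z / 2 := by
      have h := hdist_pt a b m (1/2) (by norm_num) (by norm_num)
      rw [dist_comm a m, dist_comm b m, hma, hmb, dist_comm] at h
      calc dist m (σ a b (1/2)) ≤ (1 - 1/2) * (l * dist y z / 2)
            + (1/2) * (l * dist y z / 2) := h
        _ = l * dist y z / 2 := by ring
    have hmid_ge : l * dist y z / 2 ≤ dist m (σ a b (1/2)) := by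
      have hyM : dist (σ a b (1/2)) y ≤ (1 - l) * dist y z / 2 := by
        have h := hdist_pt a b y (1/2) (by norm_num) (by norm_num)
        rw [dist_comm a y, dist_comm b y, hya, hyb] at h
        calc dist (σ a b (1/2)) y ≤ (1 - 1/2) * ((1 - l) * dist y z / 2)
              + (1/2) * ((1 - l) * dist y z / 2) := h
          _ = (1 - l) * dist y z / 2 := by ring
      have htri : dist y m ≤ dist y (σ a b (1/2)) + dist (σ a b (1/2)) m :=
        dist_triangle _ _ _
      rw [hym] at htri
      rw [dist_comm y (σ a b (1/2))] at htri
      rw [dist_comm m (σ a b (1/2))]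
      linarith
    -- now squeeze
    have hc0 : (0:ℝ) ≤ l * dist y z / 2 := by positivity
    have hpow : (l * dist y z / 2) ^ p ≤ dist m (σ a b (1/2)) ^ p :=
      Real.rpow_le_rpow hc0 hmid_ge hp0
    rw [hma, hmb] at hineq
    have hke : k * dist a b ^ p ≤ 0 := by linarith
    by_contra hne
    have hd0 : 0 < dist a b := by
      rcases lt_or_eq_of_le (dist_nonneg (x := a) (y := b)) with h | h
      · exact h
      · exact absurd (dist_eq_zero.mp h.symm) hne
    have : 0 < k * dist a b ^ p := mul_pos hk (Real.rpow_pos_of_pos hd0 p)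
    linarith
  -- main application: apex scaled toward m, base points on the geodesic around m
  set xl := σ m x l with hxl
  set zl := σ y z ((1 + l)/2) with hzl
  have hs0 : (0:ℝ) ≤ (1 - l)/2 := by linarith
  have hst : (1 - l)/2 ≤ (1 + l)/2 := by linarith
  have ht1 : (1 + l)/2 ≤ 1 := by linarith
  -- z-side point is a scaled point from m
  have hzrev : σ m z l = zl := by
    have h := hcons y z (1/2) 1 l (by norm_num) (by norm_num) le_rfl ⟨hl0.le, hl1⟩
    rw [h1, ← hm] at h
    rw [h, hzl, show (1 - l) * (1/2) + l * 1 = (1 + l)/2 by ring]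
  -- midpoint of (b, zl) is m
  have hmid : σ b zl (1/2) = m := by
    have h := hcons y z ((1 - l)/2) ((1 + l)/2) (1/2) hs0 hst ht1
      ⟨by norm_num, by norm_num⟩
    rw [← hb, ← hzl] at h
    rw [h, show (1 - 1/2) * ((1 - l)/2) + (1/2) * ((1 + l)/2) = 1/2 by ring, ← hm]
  have hbzl : dist b zl = l * dist y z := by
    have h := hgamma ((1 - l)/2) ((1 + l)/2) hs0 (by linarith) (by linarith) ht1
    rw [← hb, ← hzl] at h
    rw [h, show |(1 - l)/2 - (1 + l)/2| = l by
      rw [show (1 - l)/2 - (1 + l)/2 = -l by ring, abs_neg, abs_of_nonneg hl0.le]]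
  have hxlm : dist xl m = l * dist x m := by
    have h := hgeo m x 0 ⟨le_rfl, zero_le_one⟩ l ⟨hl0.le, hl1⟩
    rw [h0, show |(0:ℝ) - l| = l by rw [zero_sub, abs_neg, abs_of_nonneg hl0.le]] at h
    rw [← hxl] at h
    rw [dist_comm, h, dist_comm m x]
  have hmzl : dist m zl = l * dist y z / 2 := by
    have h := hgamma (1/2) ((1 + l)/2) (by norm_num) (by norm_num) (by linarith) ht1
    rw [← hm, ← hzl] at h
    rw [h, show |(1:ℝ)/2 - (1 + l)/2| = l/2 by
      rw [show (1:ℝ)/2 - (1 + l)/2 = -(l/2) by ring, abs_neg,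
        abs_of_nonneg (by linarith)]]
    ring
  have hxlU : xl ∈ U := hball (by rw [Metric.mem_ball, hxlm, dist_comm x m]; exact hlx)
  have hzlU : zl ∈ U := hball (by rw [Metric.mem_ball, dist_comm, hmzl]; exact hc_lt)
  have hbzgeo : ∀ t ∈ Icc (0:ℝ) 1, σ b zl t ∈ U := by
    intro t ht
    apply hball
    rw [Metric.mem_ball]
    have h := hdist_pt b zl m t ht.1 ht.2
    rw [dist_comm b m, dist_comm zl m, hmb, hmzl] at h
    calc dist (σ b zl t) m ≤ (1 - t) * (l * dist y z / 2) + t * (l * dist y z / 2) := h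
      _ = l * dist y z / 2 := by ring
      _ < r := hc_lt
  have hineq := hUloc xl hxlU b hbU zl hzlU hbzgeo
  rw [hmid, hbzl] at hineq
  -- bound the cross sides by convexity
  have hxly : dist xl b ≤ l * dist x y := by
    have h := hchord m x m y l hl0.le hl1
    rw [dist_self, ← hxl, ← ha, hrev] at h
    calc dist xl b ≤ (1 - l) * 0 + l * dist x y := h
      _ = l * dist x y := by ring
  have hxlz : dist xl zl ≤ l * dist x z := by
    have h := hchord m x m z l hl0.le hl1
    rw [dist_self, ← hxl, hzrev] at h
    calc dist xl zl ≤ (1 - l) * 0 + l * dist x z := h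
      _ = l * dist x z := by ring
  -- put everything together and divide by l^p
  have hlp : (0:ℝ) < l ^ p := Real.rpow_pos_of_pos hl0 p
  have key : l ^ p * (dist x m ^ p) ≤
      l ^ p * ((1/2) * dist x y ^ p + (1/2) * dist x z ^ p - k * dist y z ^ p) := by
    have e1 : l ^ p * (dist x m ^ p) = dist xl m ^ p := by
      rw [hxlm, Real.mul_rpow hl0.le dist_nonneg]
    have e2 : dist xl b ^ p ≤ (l * dist x y) ^ p :=
      Real.rpow_le_rpow dist_nonneg hxly hp0
    have e3 : dist xl zl ^ p ≤ (l * dist x z) ^ p :=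
      Real.rpow_le_rpow dist_nonneg hxlz hp0
    have e4 : (l * dist x y) ^ p = l ^ p * dist x y ^ p :=
      Real.mul_rpow hl0.le dist_nonneg
    have e5 : (l * dist x z) ^ p = l ^ p * dist x z ^ p :=
      Real.mul_rpow hl0.le dist_nonneg
    have e6 : (l * dist y z) ^ p = l ^ p * dist y z ^ p :=
      Real.mul_rpow hl0.le dist_nonneg
    rw [e1]
    calc dist xl m ^ p
        ≤ (1/2) * dist xl b ^ p + (1/2) * dist xl zl ^ p - k * (l * dist y z) ^ p :=
          hineq
      _ ≤ (1/2) * (l ^ p * dist x y ^ p) + (1/2) * (l ^ p * dist x z ^ p)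
            - k * (l ^ p * dist y z ^ p) := by
          rw [← e4, ← e5, ← e6]; linarith
      _ = l ^ p * ((1/2) * dist x y ^ p + (1/2) * dist x z ^ p - k * dist y z ^ p) := by
          ring
  exact le_of_mul_le_mul_left key hlp
end

section
/- For p ∈ (1,∞), consider the function f(x,y) = ((1−x)^p + y^p + 2x^p)^{1/p} + ((1−x)^p + (1−y)^p + 2x^p)^{1/p} on [0,1]². Its minimum over [0,1]² is attained at y = 1/2 and x = (1 + 2^{1/(p−1)})^{−1}, and in particular the minimizing x satisfies x < 1/2. -/
-- tangent line inequality for rpow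
lemma tangent {p b t : ℝ} (hp : 1 < p) (hb : 0 < b) (ht : 0 ≤ t) :
    b ^ p + p * b ^ (p-1) * (t - b) ≤ t ^ p := by
  have hs : -1 ≤ t / b - 1 := by
    have : 0 ≤ t / b := div_nonneg ht hb.le
    linarith
  have h := one_add_mul_self_le_rpow_one_add hs hp.le
  have h1 : (1 : ℝ) + (t / b - 1) = t / b := by ring
  rw [h1] at h
  have hb' : (0:ℝ) < b ^ p := Real.rpow_pos_of_pos hb p
  have h2 := mul_le_mul_of_nonneg_left h hb'.le
  have h3 : b ^ p * (t / b) ^ p = t ^ p := by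
    rw [Real.div_rpow ht hb.le]
    field_simp
  have h4 : b ^ (p - 1) = b ^ p / b := Real.rpow_sub_one hb.ne' p
  rw [h3] at h2
  rw [h4]
  have : b ^ p * (1 + p * (t / b - 1)) = b ^ p + p * (b ^ p / b) * (t - b) := by
    field_simp
  linarith [this ▸ h2]

theorem stmt_8 (p : ℝ) (hp : 1 < p) :
    let f : ℝ → ℝ → ℝ := fun x y =>
      ((1 - x) ^ p + y ^ p + 2 * x ^ p) ^ (1/p)
        + ((1 - x) ^ p + (1 - y) ^ p + 2 * x ^ p) ^ (1/p)
    let x₀ : ℝ := (1 + (2:ℝ) ^ (1/(p-1)))⁻¹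
    (∀ x ∈ Set.Icc (0:ℝ) 1, ∀ y ∈ Set.Icc (0:ℝ) 1, f x₀ (1/2) ≤ f x y) ∧
      x₀ < 1/2 := by
  intro f x₀
  have hp0 : (0:ℝ) < p := by linarith
  have hp1 : (0:ℝ) < p - 1 := by linarith
  set a : ℝ := (2:ℝ) ^ (1/(p-1)) with ha
  have ha1 : 1 < a := Real.one_lt_rpow_iff_of_pos (by norm_num) |>.2 (Or.inl ⟨by norm_num, by positivity⟩)
  have ha0 : 0 < a := by linarith
  have h1a : (0:ℝ) < 1 + a := by linarith
  have hx0 : x₀ = (1 + a)⁻¹ := rfl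
  clear_value x₀
  have hx0pos : 0 < x₀ := by rw [hx0]; positivity
  have hx0lt : x₀ < 1/2 := by
    rw [hx0, show (1:ℝ)/2 = (2:ℝ)⁻¹ by norm_num]
    exact inv_strictAnti₀ (by norm_num) (by linarith)
  have hx0le1 : x₀ ≤ 1 := by
    rw [hx0]; rw [inv_le_one_iff₀]; right; linarith
  have h1x0 : 1 - x₀ = a * x₀ := by
    rw [hx0]; field_simp; ring
  have hap : a ^ (p - 1) = 2 := by
    rw [ha, ← Real.rpow_mul (by norm_num : (0:ℝ) ≤ 2), one_div_mul_cancel hp1.ne',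
      Real.rpow_one]
  have hkey : (1 - x₀) ^ (p - 1) = 2 * x₀ ^ (p - 1) := by
    rw [h1x0, Real.mul_rpow ha0.le hx0pos.le, hap]
  -- two-power facts
  have h2p : (0:ℝ) < (2:ℝ) ^ p := by positivity
  have h2half : (2:ℝ) ^ p * (1/2) ^ p = 1 := by
    rw [← Real.mul_rpow (by norm_num) (by norm_num)]
    norm_num
  -- the lower-bound function base
  set c : ℝ := (2:ℝ) ^ (1/p) with hc
  have hc0 : 0 < c := by positivity
  have hcp : c ^ p = 2 := by
    rw [hc, ← Real.rpow_mul (by norm_num : (0:ℝ) ≤ 2), one_div_mul_cancel hp0.ne',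
      Real.rpow_one]
  have hB : ∀ x : ℝ, 0 ≤ x →
      ((2*(1-x)) ^ p + 1 + (2*(c*x)) ^ p)
        = (2:ℝ)^p * (1-x)^p + 1 + 2^p * 2 * x^p → True := fun _ _ _ => trivial
  -- value at the minimizer
  have hval : f x₀ (1/2) =
      ((2:ℝ)^p * (1-x₀)^p + 1 + 2^p * 2 * x₀^p) ^ (1/p) := by
    show ((1 - x₀) ^ p + (1/2) ^ p + 2 * x₀ ^ p) ^ (1/p)
        + ((1 - x₀) ^ p + (1 - 1/2) ^ p + 2 * x₀ ^ p) ^ (1/p) = _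
    have hbase : (0:ℝ) ≤ (1 - x₀) ^ p + (1/2) ^ p + 2 * x₀ ^ p := by
      have := Real.rpow_nonneg (by linarith : (0:ℝ) ≤ 1 - x₀) p
      have := Real.rpow_nonneg (by norm_num : (0:ℝ) ≤ (1:ℝ)/2) p
      have := Real.rpow_nonneg hx0pos.le p
      linarith
    have h2eq : (((2:ℝ)^p))^(1/p) = 2 := by
      rw [← Real.rpow_mul (by norm_num : (0:ℝ) ≤ 2), mul_one_div_cancel hp0.ne',
        Real.rpow_one]
    rw [show (1:ℝ) - 1/2 = 1/2 by norm_num, ← two_mul]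
    calc (2:ℝ) * ((1 - x₀) ^ p + (1/2) ^ p + 2 * x₀ ^ p) ^ (1/p)
        = ((2:ℝ)^p)^(1/p) * ((1 - x₀) ^ p + (1/2) ^ p + 2 * x₀ ^ p) ^ (1/p) := by rw [h2eq]
      _ = ((2:ℝ)^p * ((1 - x₀) ^ p + (1/2) ^ p + 2 * x₀ ^ p)) ^ (1/p) :=
          (Real.mul_rpow h2p.le hbase).symm
      _ = ((2:ℝ)^p * (1-x₀)^p + 1 + 2^p * 2 * x₀^p) ^ (1/p) := by
          rw [show (2:ℝ)^p * ((1 - x₀) ^ p + (1/2) ^ p + 2 * x₀ ^ p)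
            = 2^p * (1-x₀)^p + 2^p * (1/2)^p + 2^p * 2 * x₀^p by ring, h2half]
  rw [hval]
  refine ⟨?_, hx0lt⟩
  intro x hx y hy
  obtain ⟨hx0', hx1⟩ := hx
  obtain ⟨hy0, hy1⟩ := hy
  -- Minkowski step
  have hmink : ((2*(1-x)) ^ p + 1 ^ p + (2*(c*x)) ^ p) ^ (1/p) ≤ f x y := by
    have := Real.Lp_add_le_of_nonneg (p := p) (Finset.univ : Finset (Fin 3))
      (f := ![1-x, y, c*x]) (g := ![1-x, 1-y, c*x]) hp.le
      (by intro i _; fin_cases i <;> simp <;> [linarith; linarith; positivity])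
      (by intro i _; fin_cases i <;> simp <;> [linarith; linarith; positivity])
    simp only [Fin.sum_univ_three, Matrix.cons_val_zero, Matrix.cons_val_one,
      Matrix.head_cons, Matrix.cons_val_two, Matrix.tail_cons, Pi.add_apply] at this
    have hcx : (c*x) ^ p = 2 * x ^ p := by
      rw [Real.mul_rpow hc0.le hx0', hcp]
    have e1 : (1-x) + (1-x) = 2*(1-x) := by ring
    have e2 : y + (1-y) = 1 := by ring
    have e3 : (c*x) + (c*x) = 2*(c*x) := by ring
    rw [e1, e2, e3, hcx] at this
    calc ((2*(1-x)) ^ p + 1 ^ p + (2*(c*x)) ^ p) ^ (1/p)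
        ≤ ((1-x)^p + y^p + 2*x^p) ^ (1/p) + ((1-x)^p + (1-y)^p + 2*x^p) ^ (1/p) := this
      _ = f x y := rfl
  refine le_trans ?_ hmink
  -- rewrite the Minkowski lower bound
  have hcx2 : (2*(c*x)) ^ p = 2^p * 2 * x ^ p := by
    rw [show 2*(c*x) = 2*c*x by ring, Real.mul_rpow (by positivity) hx0',
      Real.mul_rpow (by norm_num) hc0.le, hcp]
  have h2x : (2*(1-x)) ^ p = 2^p * (1-x)^p := by
    rw [Real.mul_rpow (by norm_num) (by linarith)]
  rw [hcx2, h2x, Real.one_rpow]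
  -- now monotone rpow + tangent line
  apply Real.rpow_le_rpow
  · have A : (0:ℝ) ≤ (1-x₀)^p := Real.rpow_nonneg (by linarith) p
    have B : (0:ℝ) ≤ x₀^p := Real.rpow_nonneg hx0pos.le p
    have := mul_nonneg h2p.le A
    have := mul_nonneg (mul_nonneg h2p.le (by norm_num : (0:ℝ) ≤ 2)) B
    linarith
  · have t1 := tangent (b := 1 - x₀) (t := 1 - x) hp (by linarith) (by linarith)
    have t2 := tangent (b := x₀) (t := x) hp hx0pos hx0'
    rw [hkey] at t1
    have u1 := mul_le_mul_of_nonneg_left t1 h2p.le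
    have u2 := mul_le_mul_of_nonneg_left t2 (by positivity : (0:ℝ) ≤ 2^p * 2)
    nlinarith [u1, u2]
  · positivity
end

section
/- Consider the piecewise-normed space X obtained by gluing the half-plane H₁ = {(x,y) ∈ ℝ² : x ≤ 0} with the ℓ² norm and H₂ = {(x,y) ∈ ℝ² : x ≥ 0} with the ℓ³ norm along the line {x = 0}, with the induced length metric. For the points a = (−1,0) ∈ H₁, b = (1,0) ∈ H₂, and c = (0,√3): d(a,b) = 2, d(a,c) = 2, d(b,c) = (1 + 3^{3/2})^{1/3}, the midpoint of [a,b] is (0,0), the midpoint of [a,c] is (−1/2, √3/2), and the distance between these midpoints is 1, which is strictly greater than d(b,c)/2. Hence X is not Busemann-convex. -/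
/-- The `ℓ²` norm on `ℝ²`. -/
noncomputable def glueN2 (v : ℝ × ℝ) : ℝ := (v.1 ^ 2 + v.2 ^ 2) ^ ((1:ℝ)/2)

/-- The `ℓ³` norm on `ℝ²`. -/
noncomputable def glueN3 (v : ℝ × ℝ) : ℝ := (|v.1| ^ 3 + |v.2| ^ 3) ^ ((1:ℝ)/3)

/-- The length metric on the gluing of the half-plane `{x ≤ 0}` with the `ℓ²` norm
and the half-plane `{x ≥ 0}` with the `ℓ³` norm along the line `{x = 0}`. -/
noncomputable def dGlue (a b : ℝ × ℝ) : ℝ :=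
  if a.1 ≤ 0 ∧ b.1 ≤ 0 then glueN2 (a - b)
  else if 0 ≤ a.1 ∧ 0 ≤ b.1 then glueN3 (a - b)
  else if a.1 ≤ 0 then ⨅ t : ℝ, (glueN2 (a - (0, t)) + glueN3 ((0, t) - b))
  else ⨅ t : ℝ, (glueN3 (a - (0, t)) + glueN2 ((0, t) - b))

lemma four_half : (4:ℝ) ^ ((1:ℝ)/2) = 2 := by
  rw [show (4:ℝ) = 2^(2:ℕ) by norm_num, ← Real.rpow_natCast 2 2,
    ← Real.rpow_mul (by norm_num)]
  norm_num

lemma sqrt3_sq : Real.sqrt 3 ^ 2 = 3 := Real.sq_sqrt (by norm_num)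

lemma inf_ab : (⨅ t : ℝ, ((1 + t^2) ^ ((1:ℝ)/2) + (1 + |t|^3) ^ ((1:ℝ)/3))) = 2 := by
  apply le_antisymm
  · have h := ciInf_le (f := fun t : ℝ => (1 + t^2) ^ ((1:ℝ)/2) + (1 + |t|^3) ^ ((1:ℝ)/3))
      ⟨0, by rintro x ⟨t, rfl⟩
             have h1 : (0:ℝ) ≤ (1 + t^2) ^ ((1:ℝ)/2) := Real.rpow_nonneg (by positivity) _
             have h2 : (0:ℝ) ≤ (1 + |t|^3) ^ ((1:ℝ)/3) := Real.rpow_nonneg (by positivity) _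
             simp only
             linarith⟩ 0
    norm_num [Real.one_rpow] at h
    convert h using 2
  · apply le_ciInf
    intro t
    have h1 : (1:ℝ) ≤ (1 + t^2) ^ ((1:ℝ)/2) := by
      calc (1:ℝ) = 1 ^ ((1:ℝ)/2) := (Real.one_rpow _).symm
        _ ≤ (1 + t^2) ^ ((1:ℝ)/2) :=
          Real.rpow_le_rpow (by norm_num) (le_add_of_nonneg_right (by positivity)) (by norm_num)
    have h2 : (1:ℝ) ≤ (1 + |t|^3) ^ ((1:ℝ)/3) := by
      calc (1:ℝ) = 1 ^ ((1:ℝ)/3) := (Real.one_rpow _).symm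
        _ ≤ (1 + |t|^3) ^ ((1:ℝ)/3) :=
          Real.rpow_le_rpow (by norm_num) (le_add_of_nonneg_right (by positivity)) (by norm_num)
    linarith

theorem stmt_13 :
    let a : ℝ × ℝ := (-1, 0)
    let b : ℝ × ℝ := (1, 0)
    let c : ℝ × ℝ := (0, Real.sqrt 3)
    let m₁ : ℝ × ℝ := (0, 0)
    let m₂ : ℝ × ℝ := (-(1/2), Real.sqrt 3 / 2)
    dGlue a b = 2 ∧ dGlue a c = 2 ∧
    dGlue b c = (1 + (3:ℝ) ^ ((3:ℝ)/2)) ^ ((1:ℝ)/3) ∧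
    dGlue a m₁ = dGlue a b / 2 ∧ dGlue m₁ b = dGlue a b / 2 ∧
    dGlue a m₂ = dGlue a c / 2 ∧ dGlue m₂ c = dGlue a c / 2 ∧
    dGlue m₁ m₂ = 1 ∧ dGlue b c / 2 < dGlue m₁ m₂ ∧
    ¬ (∀ x y z mxy mxz : ℝ × ℝ,
        (dGlue x mxy = dGlue x y / 2 ∧ dGlue mxy y = dGlue x y / 2) →
        (dGlue x mxz = dGlue x z / 2 ∧ dGlue mxz z = dGlue x z / 2) →
        dGlue mxy mxz ≤ dGlue y z / 2) := by
  intro a b c m₁ m₂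
  have hs3 : (0:ℝ) ≤ Real.sqrt 3 := Real.sqrt_nonneg 3
  have hab : dGlue a b = 2 := by
    show dGlue (-1,0) (1,0) = 2
    rw [dGlue]
    norm_num [glueN2, glueN3, Prod.sub_def]
    exact inf_ab
  have hac : dGlue a c = 2 := by
    show dGlue (-1,0) (0, Real.sqrt 3) = 2
    rw [dGlue]
    norm_num [glueN2, Prod.sub_def, sqrt3_sq]
  have hbc : dGlue b c = (1 + (3:ℝ) ^ ((3:ℝ)/2)) ^ ((1:ℝ)/3) := by
    show dGlue (1,0) (0, Real.sqrt 3) = _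
    rw [dGlue]
    norm_num [glueN3, Prod.sub_def, abs_of_nonneg hs3]
    rw [show Real.sqrt 3 ^ 3 = (3:ℝ) ^ ((3:ℝ)/2) by
      rw [Real.sqrt_eq_rpow, ← Real.rpow_natCast ((3:ℝ)^((1/2:ℝ))) 3,
        ← Real.rpow_mul (by norm_num)]
      norm_num]
  have ham1 : dGlue a m₁ = 1 := by
    show dGlue (-1,0) (0,0) = 1
    rw [dGlue]
    norm_num [glueN2, Prod.sub_def]
  have hm1b : dGlue m₁ b = 1 := by
    show dGlue (0,0) (1,0) = 1
    rw [dGlue]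
    norm_num [glueN3, Prod.sub_def]
  have ham2 : dGlue a m₂ = 1 := by
    show dGlue (-1,0) (-(1/2), Real.sqrt 3 / 2) = 1
    rw [dGlue]
    norm_num [glueN2, Prod.sub_def]
    rw [show (1/4 + (Real.sqrt 3/2)^2 : ℝ) = 1 by nlinarith [sqrt3_sq]]
    exact Real.one_rpow _
  have hm2c : dGlue m₂ c = 1 := by
    show dGlue (-(1/2), Real.sqrt 3 / 2) (0, Real.sqrt 3) = 1
    rw [dGlue]
    norm_num [glueN2, Prod.sub_def]
    rw [show (1/4 + (Real.sqrt 3/2 - Real.sqrt 3)^2 : ℝ) = 1 by nlinarith [sqrt3_sq]]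
    exact Real.one_rpow _
  have hm1m2 : dGlue m₁ m₂ = 1 := by
    show dGlue (0,0) (-(1/2), Real.sqrt 3 / 2) = 1
    rw [dGlue]
    norm_num [glueN2, Prod.sub_def]
    rw [show (1/4 + (Real.sqrt 3/2)^2 : ℝ) = 1 by nlinarith [sqrt3_sq]]
    exact Real.one_rpow _
  have hlt : dGlue b c / 2 < dGlue m₁ m₂ := by
    rw [hbc, hm1m2]
    have h32 : (3:ℝ) ^ ((3:ℝ)/2) < 7 := by
      have : ((3:ℝ) ^ ((3:ℝ)/2))^(2:ℕ) = 27 := by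
        rw [← Real.rpow_natCast ((3:ℝ)^((3:ℝ)/2)) 2, ← Real.rpow_mul (by norm_num)]
        norm_num
      nlinarith [Real.rpow_nonneg (show (0:ℝ) ≤ 3 by norm_num) ((3:ℝ)/2)]
    have h8 : (1:ℝ) + (3:ℝ) ^ ((3:ℝ)/2) < 8 := by linarith
    have : (1 + (3:ℝ) ^ ((3:ℝ)/2)) ^ ((1:ℝ)/3) < 8 ^ ((1:ℝ)/3) := by
      apply Real.rpow_lt_rpow (by positivity) h8 (by norm_num)
    have h83 : (8:ℝ) ^ ((1:ℝ)/3) = 2 := by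
      rw [show (8:ℝ) = 2^(3:ℕ) by norm_num, ← Real.rpow_natCast 2 3,
        ← Real.rpow_mul (by norm_num)]
      norm_num
    linarith
  refine ⟨hab, hac, hbc, by rw [ham1, hab]; norm_num, by rw [hm1b, hab]; norm_num,
    by rw [ham2, hac]; norm_num, by rw [hm2c, hac]; norm_num, hm1m2, hlt, ?_⟩
  intro h
  have := h a b c m₁ m₂ ⟨by rw [ham1, hab]; norm_num, by rw [hm1b, hab]; norm_num⟩
    ⟨by rw [ham2, hac]; norm_num, by rw [hm2c, hac]; norm_num⟩
  linarith
end

section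
/- Let C = [0,1]^n and C' = [0,1]^{n'} be unit cubes glued at a single common vertex v (identified with the origin of each), and equip each cube with the ℓ^p metric for p ∈ (1,∞). Let x ∈ C with all coordinates positive and ‖x‖_p = 1, and y ∈ C' with all coordinates positive and ‖y‖_p = 1. Suppose C = A₁ × A₂ and C' = B₁ × B₂ are decompositions (A₂ = first m coordinates' complement structure as in product of coordinate subcubes). For a = π_{A₂}(x), b = π_{B₁}(y), and α ≥ 0, define g(α) = (α^p‖a‖^p + ‖b‖^p)^{1/p} − α‖a‖^p − ‖b‖^p. Then g attains its minimum on [0,∞) at the unique α > 0 with α^p = ‖b‖^p/(1 − ‖a‖^p), and at this α one has g(α) = (‖a‖^p − 1)(α^p − α). Consequently g(α) ≥ 0 for all α ≥ 0 if and only if ‖a‖^p + ‖b‖^p ≤ 1. -/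
theorem stmt_14 (p na nb : ℝ) (hp : 1 < p)
    (ha0 : 0 < na) (ha1 : na < 1) (hb0 : 0 < nb) (hb1 : nb < 1) :
    let g : ℝ → ℝ := fun α => (α ^ p * na ^ p + nb ^ p) ^ (1/p) - α * na ^ p - nb ^ p
    let α₀ : ℝ := (nb ^ p / (1 - na ^ p)) ^ (1/p)
    (0 < α₀ ∧ α₀ ^ p = nb ^ p / (1 - na ^ p)) ∧
    (∀ α : ℝ, 0 < α → α ^ p = nb ^ p / (1 - na ^ p) → α = α₀) ∧
    (∀ α : ℝ, 0 ≤ α → g α₀ ≤ g α) ∧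
    g α₀ = (na ^ p - 1) * (α₀ ^ p - α₀) ∧
    ((∀ α : ℝ, 0 ≤ α → 0 ≤ g α) ↔ na ^ p + nb ^ p ≤ 1) := by
  intro g α₀
  have hp0 : (0:ℝ) < p := lt_trans one_pos hp
  have hpne : p ≠ 0 := ne_of_gt hp0
  have hApos : 0 < na ^ p := Real.rpow_pos_of_pos ha0 p
  have hAlt : na ^ p < 1 := Real.rpow_lt_one ha0.le ha1 hp0
  have hBpos : 0 < nb ^ p := Real.rpow_pos_of_pos hb0 p
  have h1A : 0 < 1 - na ^ p := by linarith
  have hDpos : 0 < nb ^ p / (1 - na ^ p) := div_pos hBpos h1A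
  have hα₀pos : 0 < α₀ := Real.rpow_pos_of_pos hDpos _
  have hα₀p : α₀ ^ p = nb ^ p / (1 - na ^ p) := by
    show ((nb ^ p / (1 - na ^ p)) ^ (1/p)) ^ p = _
    rw [one_div, Real.rpow_inv_rpow hDpos.le hpne]
  -- value of the inner expression at α₀
  have hinner : α₀ ^ p * na ^ p + nb ^ p = α₀ ^ p := by
    rw [hα₀p]; field_simp; ring
  have hg0 : g α₀ = α₀ * (1 - na ^ p) - nb ^ p := by
    show (α₀ ^ p * na ^ p + nb ^ p) ^ (1/p) - α₀ * na ^ p - nb ^ p = _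
    rw [hinner, one_div, Real.rpow_rpow_inv hα₀pos.le hpne]; ring
  have hmin : ∀ α : ℝ, 0 ≤ α → g α₀ ≤ g α := by
    intro α hα
    have hconv := (convexOn_rpow hp.le).2 (Set.mem_Ici.mpr hα) (Set.mem_Ici.mpr hα₀pos.le)
      hApos.le h1A.le (by ring)
    simp only [smul_eq_mul] at hconv
    have hsum : 0 ≤ na ^ p * α + (1 - na ^ p) * α₀ := by positivity
    have key : na ^ p * α + (1 - na ^ p) * α₀ ≤ (α ^ p * na ^ p + nb ^ p) ^ (1/p) := by
      have h1 : ((na ^ p * α + (1 - na ^ p) * α₀) ^ p) ^ (1/p)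
          ≤ (na ^ p * α ^ p + (1 - na ^ p) * α₀ ^ p) ^ (1/p) :=
        Real.rpow_le_rpow (Real.rpow_nonneg hsum p) hconv (by positivity)
      rw [one_div, Real.rpow_rpow_inv hsum hpne] at h1
      have h2 : na ^ p * α ^ p + (1 - na ^ p) * α₀ ^ p = α ^ p * na ^ p + nb ^ p := by
        rw [hα₀p]; field_simp
      rw [← h2, one_div]; exact h1
    have : g α = (α ^ p * na ^ p + nb ^ p) ^ (1/p) - α * na ^ p - nb ^ p := rfl
    rw [this, hg0]; nlinarith [key]
  refine ⟨⟨hα₀pos, hα₀p⟩, ?_, hmin, ?_, ?_⟩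
  · intro α hα hαp
    have : (α ^ p) ^ (1/p) = (α₀ ^ p) ^ (1/p) := by rw [hαp, hα₀p]
    rwa [one_div, Real.rpow_rpow_inv hα.le hpne, Real.rpow_rpow_inv hα₀pos.le hpne] at this
  · rw [hg0, hα₀p]; field_simp; ring
  · -- the iff
    have hiff : α₀ ≤ 1 ↔ na ^ p + nb ^ p ≤ 1 := by
      constructor
      · intro h
        have : α₀ ^ p ≤ 1 := Real.rpow_le_one hα₀pos.le h hp0.le
        rw [hα₀p, div_le_one h1A] at this; linarith
      · intro h
        have hD1 : nb ^ p / (1 - na ^ p) ≤ 1 := (div_le_one h1A).mpr (by linarith)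
        exact Real.rpow_le_one hDpos.le hD1 (by positivity)
    have hiff2 : α₀ ^ p ≤ α₀ ↔ α₀ ≤ 1 := by
      constructor
      · intro h
        by_contra hc
        push_neg at hc
        have := Real.rpow_lt_rpow_of_exponent_lt hc hp
        rw [Real.rpow_one] at this; linarith
      · intro h
        have := Real.rpow_le_rpow_of_exponent_ge hα₀pos h hp.le
        rwa [Real.rpow_one] at this
    constructor
    · intro hall
      have h0 := hall α₀ hα₀pos.le
      rw [hg0] at h0
      have hBeq : nb ^ p = α₀ ^ p * (1 - na ^ p) := by
        rw [hα₀p]; field_simp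
      have : α₀ ^ p ≤ α₀ := by nlinarith
      have h1 := hiff2.mp this
      exact hiff.mp h1
    · intro h α hα
      have h1 : α₀ ≤ 1 := hiff.mpr h
      have h2 : α₀ ^ p ≤ α₀ := hiff2.mpr h1
      have h3 : 0 ≤ g α₀ := by
        rw [hg0, hα₀p] at *
        have : nb ^ p = (nb ^ p / (1 - na ^ p)) * (1 - na ^ p) := by field_simp
        nlinarith
      linarith [hmin α hα]
end

section
/- Let X be a strongly B1 geodesic metric space and let G be a finitely generated group acting by isometries on X. Assume G contains a central element z such that n ↦ z^n·x₀ is a quasi-geodesic in X for some x₀ ∈ X. Then some finite-index subgroup G₀ of G containing z splits as a direct product G₀ ≅ Ker(φ) × ⟨z⟩ ≅ Ker(φ) × ℤ, where φ : G₀ → ℤ is a homomorphism with φ(z) = −1. -/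
open Set

open Filter Topology in
private lemma ultra_lim_aux (U : Ultrafilter ℕ) (f : ℕ → ℝ) (C : ℝ) (hf : ∀ n, |f n| ≤ C) :
    ∃ x : ℝ, Filter.Tendsto f (U : Filter ℕ) (𝓝 x) := by
  have hle : (Ultrafilter.map f U : Filter ℝ) ≤ Filter.principal (Set.Icc (-C) C) := by
    rw [Filter.le_principal_iff]
    exact Filter.mem_map.mpr (Filter.univ_mem' fun n => Set.mem_Icc.mpr (abs_le.mp (hf n)))
  obtain ⟨x, -, hx⟩ := isCompact_Icc.ultrafilter_le_nhds (Ultrafilter.map f U) hle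
  exact ⟨x, hx⟩

private lemma split_lemma_aux {K : Type*} [Group K] (ζ : K) (hc : ∀ k : K, k * ζ = ζ * k)
    (φ : K →* Multiplicative ℤ) (hφ : φ ζ = Multiplicative.ofAdd (-1)) :
    Nonempty (K ≃* φ.ker × Multiplicative ℤ) := by
  have hcom : ∀ (k : K) (a : ℤ), k * ζ ^ a = ζ ^ a * k := by
    intro k a
    have h : Commute k ζ := hc k
    exact (h.zpow_right a).eq
  set n : K → ℤ := fun g => -Multiplicative.toAdd (φ g) with hn
  have hφg : ∀ g, φ g = Multiplicative.ofAdd (-(n g)) := by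
    intro g; simp [hn]
  have hφζ : ∀ a : ℤ, φ (ζ ^ a) = Multiplicative.ofAdd (-a) := by
    intro a
    rw [map_zpow, hφ, ← ofAdd_zsmul]
    norm_num
  have hφmul : ∀ (g : K) (a : ℤ), φ (g * ζ ^ a) = Multiplicative.ofAdd (-(n g) + -a) := by
    intro g a; rw [map_mul, hφζ, hφg, ← ofAdd_add]
  have hker : ∀ g : K, g * ζ ^ (-(n g)) ∈ φ.ker := by
    intro g
    rw [MonoidHom.mem_ker, hφmul]
    simp
  have hnadd : ∀ g h : K, n (g * h) = n g + n h := by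
    intro g h; simp only [hn, map_mul, toAdd_mul]; ring
  refine ⟨MulEquiv.mk' ⟨fun g => (⟨g * ζ ^ (-(n g)), hker g⟩, φ g),
    fun p => (p.1 : K) * ζ ^ (-Multiplicative.toAdd p.2), ?_, ?_⟩ ?_⟩
  · intro g
    simp only []
    have : -Multiplicative.toAdd (φ g) = n g := by simp [hn]
    rw [this, mul_assoc, ← zpow_add, neg_add_cancel, zpow_zero, mul_one]
  · rintro ⟨x, w⟩
    have hx : φ (x : K) = 1 := x.2
    have hφgg : φ ((x : K) * ζ ^ (-Multiplicative.toAdd w)) = w := by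
      rw [map_mul, hx, one_mul, hφζ, neg_neg]
      exact ofAdd_toAdd w
    have hng : n ((x : K) * ζ ^ (-Multiplicative.toAdd w)) = -Multiplicative.toAdd w := by
      simp only [hn]; rw [hφgg]
    refine Prod.ext ?_ ?_
    · apply Subtype.ext
      show ((x : K) * ζ ^ (-Multiplicative.toAdd w)) * ζ ^ (-(n _)) = (x : K)
      rw [hng, neg_neg, mul_assoc, ← zpow_add, neg_add_cancel, zpow_zero, mul_one]
    · exact hφgg
  · intro g h
    refine Prod.ext ?_ (map_mul φ g h)
    apply Subtype.ext
    show (g * h) * ζ ^ (-(n (g * h))) = (g * ζ ^ (-(n g))) * (h * ζ ^ (-(n h)))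
    rw [hnadd, neg_add, zpow_add, mul_assoc, mul_assoc]
    congr 1
    rw [← mul_assoc, hcom h (-(n g)), mul_assoc]

private lemma exists_int_hom_aux {G : Type*} [Group G] (hfg : Group.FG G) (β : G → ℝ)
    (hadd : ∀ g h, β (g * h) = β g + β h) (z : G) (hzne : β z ≠ 0) :
    ∃ θ : G → ℤ, (∀ g h, θ (g * h) = θ g + θ h) ∧ θ z ≠ 0 := by
  have hone : β 1 = 0 := by
    have := hadd 1 1; rw [mul_one] at this; linarith
  have hinv : ∀ g : G, β g⁻¹ = -β g := by
    intro g
    have := hadd g g⁻¹; rw [mul_inv_cancel, hone] at this; linarith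
  obtain ⟨S, hScl, hSfin⟩ := Group.fg_iff.mp hfg
  set Λ : Submodule ℤ ℝ := Submodule.span ℤ (β '' S) with hΛ
  have hmem : ∀ g : G, β g ∈ Λ := by
    intro g
    have hg : g ∈ Subgroup.closure S := hScl ▸ Subgroup.mem_top g
    induction hg using Subgroup.closure_induction with
    | mem x hx => exact Submodule.subset_span ⟨x, hx, rfl⟩
    | one => rw [hone]; exact Λ.zero_mem
    | mul x y _ _ hx hy => rw [hadd]; exact Λ.add_mem hx hy
    | inv x _ hx => rw [hinv]; exact Λ.neg_mem hx
  haveI : Module.Finite ℤ Λ := Module.Finite.span_of_finite ℤ (hSfin.image β)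
  haveI : Module.Free ℤ Λ := inferInstance
  set b := Module.Free.chooseBasis ℤ Λ with hb
  set v : Λ := ⟨β z, hmem z⟩ with hv
  have hvne : v ≠ 0 := by
    intro h
    apply hzne
    simpa [hv, Submodule.mk_eq_zero] using h
  have : ∃ i, b.repr v i ≠ 0 := by
    by_contra h
    push_neg at h
    apply hvne
    have : b.repr v = 0 := Finsupp.ext h
    simpa using b.repr.map_eq_zero_iff.mp this
  obtain ⟨i, hi⟩ := this
  refine ⟨fun g => b.repr ⟨β g, hmem g⟩ i, ?_, hi⟩
  intro g h
  have : (⟨β (g * h), hmem (g * h)⟩ : Λ) = ⟨β g, hmem g⟩ + ⟨β h, hmem h⟩ := by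
    apply Subtype.ext; exact hadd g h
  show b.repr ⟨β (g * h), hmem (g * h)⟩ i = b.repr ⟨β g, hmem g⟩ i + b.repr ⟨β h, hmem h⟩ i
  rw [this, map_add, Finsupp.add_apply]

open Filter Topology in
theorem stmt_15 {X G : Type*} [MetricSpace X] [Group G] [MulAction G X]
    (hiso : ∀ (g : G) (x y : X), dist (g • x) (g • y) = dist x y)
    (hfg : Group.FG G)
    (hgeo : ∀ a b : X, ∃ γ : ℝ → X, γ 0 = a ∧ γ 1 = b ∧
      ∀ s ∈ Icc (0:ℝ) 1, ∀ t ∈ Icc (0:ℝ) 1, dist (γ s) (γ t) = |s - t| * dist a b)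
    (hB1 : ∀ δ r : ℝ, 0 < δ → 0 < r → ∃ R : ℝ, 0 ≤ R ∧
      ∀ a a' b b' : X, R ≤ dist a b → R ≤ dist a' b' → R ≤ dist a b' → R ≤ dist a' b →
        dist a a' ≤ r → dist b b' ≤ r →
        dist a b + dist a' b' - dist a b' - dist a' b ≤ δ)
    (z : G) (hz : ∀ g : G, g * z = z * g) (x₀ : X)
    (hqg : ∃ lam eps : ℝ, 1 ≤ lam ∧ 0 ≤ eps ∧ ∀ m n : ℤ,
      lam⁻¹ * |(m : ℝ) - (n : ℝ)| - eps ≤ dist (z ^ m • x₀) (z ^ n • x₀) ∧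
      dist (z ^ m • x₀) (z ^ n • x₀) ≤ lam * |(m : ℝ) - (n : ℝ)| + eps) :
    ∃ (G₀ : Subgroup G) (hzG₀ : z ∈ G₀), G₀.FiniteIndex ∧
      ∃ φ : G₀ →* Multiplicative ℤ, φ ⟨z, hzG₀⟩ = Multiplicative.ofAdd (-1) ∧
        Nonempty (G₀ ≃* φ.ker × Multiplicative ℤ) := by
  classical
  obtain ⟨lam, eps, hlam, heps, hqg⟩ := hqg
  have hlam0 : (0:ℝ) < lam := lt_of_lt_of_le one_pos hlam
  have hcomm : ∀ (w : G) (n : ℕ), w * z ^ n = z ^ n * w := by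
    intro w n
    have hcwz : Commute w z := hz w
    exact (hcwz.pow_right n).eq
  set c : ℕ → ℝ := fun n => dist x₀ (z ^ n • x₀) with hcdef
  have hclow : ∀ n : ℕ, lam⁻¹ * n - eps ≤ c n := by
    intro n
    have h := (hqg 0 (n : ℤ)).1
    rw [zpow_zero, one_smul, zpow_natCast] at h
    simpa using h
  -- the set of good increments is infinite
  set S : Set ℕ := {n | lam⁻¹ / 2 ≤ c (n + 1) - c n} with hSdef
  have hSinf : S.Infinite := by
    by_contra hfin
    rw [Set.not_infinite] at hfin
    obtain ⟨n₁, hn₁⟩ := hfin.bddAbove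
    have hstep : ∀ k : ℕ, c (n₁ + 1 + k) - c (n₁ + 1) ≤ k * (lam⁻¹ / 2) := by
      intro k
      induction k with
      | zero => simp
      | succ k ih =>
        have hns : (n₁ + 1 + k) ∉ S := by
          intro hmem
          have := hn₁ hmem
          omega
        have hlt : c (n₁ + 1 + k + 1) - c (n₁ + 1 + k) < lam⁻¹ / 2 := not_le.mp hns
        have hidx : n₁ + 1 + (k + 1) = (n₁ + 1 + k) + 1 := by omega
        rw [hidx]
        push_cast
        linarith
    set B := c (n₁ + 1) + eps with hB
    have hB0 : 0 ≤ B := by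
      have : (0:ℝ) ≤ c (n₁ + 1) := dist_nonneg
      linarith
    set k := Nat.ceil (2 * lam * B) + 1 with hk
    have h1 := hclow (n₁ + 1 + k)
    have h2 := hstep k
    have h3 : (2 * lam * B : ℝ) ≤ Nat.ceil (2 * lam * B) := Nat.le_ceil _
    have h4 : ((n₁ + 1 + k : ℕ) : ℝ) = (n₁:ℝ) + 1 + k := by push_cast; ring
    rw [h4] at h1
    have hkr : (k : ℝ) = (Nat.ceil (2 * lam * B) : ℝ) + 1 := by rw [hk]; push_cast; ring
    have hinv0 : (0:ℝ) < lam⁻¹ := by positivity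
    have hnn : (0:ℝ) ≤ lam⁻¹ * ((n₁:ℝ) + 1) := by positivity
    have h6 : (k:ℝ) * (lam⁻¹/2) ≤ B := by
      have hexp : lam⁻¹ * ((n₁:ℝ) + 1 + k) = lam⁻¹ * ((n₁:ℝ) + 1) + lam⁻¹ * k := by ring
      rw [hexp] at h1
      linarith
    have h7 : (k:ℝ) ≤ 2 * lam * B := by
      have hstep2 := mul_le_mul_of_nonneg_right h6 (by positivity : (0:ℝ) ≤ 2 * lam)
      have hid : (k:ℝ) * (lam⁻¹/2) * (2 * lam) = k := by
        field_simp
      calc (k:ℝ) = (k:ℝ) * (lam⁻¹/2) * (2 * lam) := hid.symm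
        _ ≤ B * (2 * lam) := hstep2
        _ = 2 * lam * B := by ring
    linarith
  -- the ultrafilter
  haveI hne : (Filter.cofinite ⊓ Filter.principal S).NeBot :=
    hSinf.cofinite_inf_principal_neBot
  set U : Ultrafilter ℕ := Ultrafilter.of (Filter.cofinite ⊓ Filter.principal S) with hU
  have hUle := Ultrafilter.of_le (Filter.cofinite ⊓ Filter.principal S)
  have hUco : (U : Filter ℕ) ≤ Filter.cofinite := le_trans hUle inf_le_left
  have hUS : S ∈ U := Filter.le_principal_iff.mp (le_trans hUle inf_le_right)
  -- the Busemann-type functions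
  set F : ℕ → G → ℝ := fun n g => dist (g⁻¹ • x₀) (z ^ n • x₀) - c n with hF
  have hFbd : ∀ (g : G) (n : ℕ), |F n g| ≤ dist (g⁻¹ • x₀) x₀ := by
    intro g n
    simp only [hF, hcdef]
    exact abs_dist_sub_le _ _ _
  choose β hβ using fun g : G =>
    ultra_lim_aux U (fun n => F n g) (dist (g⁻¹ • x₀) x₀) (hFbd g)
  -- the key B1 estimate
  have hdiff : ∀ g h : G, ∀ δ : ℝ, 0 < δ →
      ∀ᶠ n in Filter.cofinite, |F n (g * h) - F n g - F n h| ≤ δ := by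
    intro g h δ hδ
    set r1 := dist (g⁻¹ • x₀) x₀ with hr1d
    set r2 := dist (h • x₀) x₀ with hr2d
    have hr1 : 0 ≤ r1 := dist_nonneg
    have hr2 : 0 ≤ r2 := dist_nonneg
    obtain ⟨R, hR0, hRb⟩ := hB1 δ (max r1 r2 + 1) hδ (by positivity)
    rw [Nat.cofinite_eq_atTop, Filter.eventually_atTop]
    refine ⟨Nat.ceil (lam * (R + r1 + r2 + eps)), fun n hn => ?_⟩
    have hcn : R + r1 + r2 ≤ c n := by
      have h1 := hclow n
      have h2 : lam * (R + r1 + r2 + eps) ≤ (n:ℝ) :=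
        le_trans (Nat.le_ceil _) (by exact_mod_cast hn)
      have h3 : lam⁻¹ * (lam * (R + r1 + r2 + eps)) ≤ lam⁻¹ * n :=
        mul_le_mul_of_nonneg_left h2 (by positivity)
      rw [inv_mul_cancel_left₀ (ne_of_gt hlam0)] at h3
      linarith
    set a := g⁻¹ • x₀ with ha
    set a' := x₀ with ha'
    set b := z ^ n • (h • x₀) with hb
    set b' := z ^ n • x₀ with hb'
    have e1 : dist ((g * h)⁻¹ • x₀) (z ^ n • x₀) = dist a b := by
      calc dist ((g * h)⁻¹ • x₀) (z ^ n • x₀)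
          = dist (h • (g * h)⁻¹ • x₀) (h • z ^ n • x₀) := (hiso h _ _).symm
        _ = dist a b := by
            rw [← mul_smul, ← mul_smul, mul_inv_rev, mul_inv_cancel_left, hcomm h n, mul_smul]
    have e2 : dist (h⁻¹ • x₀) (z ^ n • x₀) = dist a' b := by
      calc dist (h⁻¹ • x₀) (z ^ n • x₀)
          = dist (h • h⁻¹ • x₀) (h • z ^ n • x₀) := (hiso h _ _).symm
        _ = dist a' b := by
            rw [smul_inv_smul, ← mul_smul, hcomm h n, mul_smul]
    have hdaa' : dist a a' = r1 := rfl
    have hda'a : dist a' a = r1 := by rw [dist_comm]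
    have hdbb' : dist b b' = r2 := by
      show dist (z ^ n • (h • x₀)) (z ^ n • x₀) = r2
      rw [hiso]
    have hda'b' : dist a' b' = c n := rfl
    have htri1 : dist a' b' ≤ dist a' a + dist a b + dist b b' := dist_triangle4 a' a b b'
    have htri2 : dist a' b' ≤ dist a' a + dist a b' := dist_triangle a' a b'
    have htri3 : dist a' b' ≤ dist a' b + dist b' b := by
      rw [dist_comm b' b]; exact dist_triangle a' b b'
    have hab : R ≤ dist a b := by
      rw [hda'b'] at htri1; rw [hda'a] at htri1; rw [hdbb'] at htri1; linarith
    have hab' : R ≤ dist a b' := by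
      rw [hda'b'] at htri2; rw [hda'a] at htri2; linarith
    have ha'b : R ≤ dist a' b := by
      rw [hda'b'] at htri3
      have : dist b' b = r2 := by rw [dist_comm]; exact hdbb'
      rw [this] at htri3; linarith
    have ha'b'R : R ≤ dist a' b' := by rw [hda'b']; linarith
    have hmax1 : dist a a' ≤ max r1 r2 + 1 := by
      rw [hdaa']; have := le_max_left r1 r2; linarith
    have hmax2 : dist b b' ≤ max r1 r2 + 1 := by
      rw [hdbb']; have := le_max_right r1 r2; linarith
    have hmax2' : dist b' b ≤ max r1 r2 + 1 := by rw [dist_comm]; exact hmax2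
    have E1 := hRb a a' b b' hab ha'b'R hab' ha'b hmax1 hmax2
    have E2 := hRb a a' b' b hab' ha'b hab ha'b'R hmax1 hmax2'
    have hFgh : F n (g * h) = dist a b - c n := by
      simp only [hF]; rw [e1]
    have hFh : F n h = dist a' b - c n := by
      simp only [hF]; rw [e2]
    have hFg : F n g = dist a b' - c n := rfl
    rw [abs_le]
    constructor
    · rw [hFgh, hFh, hFg]; linarith [E2, hda'b']
    · rw [hFgh, hFh, hFg]; linarith [E1, hda'b']
  -- additivity of the limit
  have hβadd : ∀ g h : G, β (g * h) = β g + β h := by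
    intro g h
    have T1 : Filter.Tendsto (fun n => F n (g * h) - F n g - F n h) (U : Filter ℕ) (𝓝 0) := by
      rw [Metric.tendsto_nhds]
      intro ε hε
      have hco := (hdiff g h (ε / 2) (by positivity)).filter_mono hUco
      refine hco.mono fun n hn => ?_
      rw [Real.dist_eq, sub_zero]
      linarith
    have T2 := (T1.add (hβ g)).add (hβ h)
    have T3 := T2.congr
      (fun n => by ring :
        ∀ n, (F n (g * h) - F n g - F n h + F n g) + F n h = F n (g * h))
    rw [zero_add, ] at T3
    exact tendsto_nhds_unique (hβ (g * h)) T3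
  -- lower bound for β z
  have hFz : ∀ n : ℕ, F n z = c (n + 1) - c n := by
    intro n
    simp only [hF]
    congr 1
    calc dist (z⁻¹ • x₀) (z ^ n • x₀)
        = dist (z • z⁻¹ • x₀) (z • z ^ n • x₀) := (hiso z _ _).symm
      _ = c (n + 1) := by rw [smul_inv_smul, ← mul_smul, ← pow_succ']
  have hβz : lam⁻¹ / 2 ≤ β z := by
    refine ge_of_tendsto (hβ z) ?_
    have hev : ∀ᶠ n in (U : Filter ℕ), n ∈ S := hUS
    refine hev.mono fun n hn => ?_
    rw [hFz n]
    exact hn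
  have hβzne : β z ≠ 0 := ne_of_gt (lt_of_lt_of_le (by positivity) hβz)
  -- integer-valued homomorphism
  obtain ⟨θ, hθadd, hθz⟩ := exists_int_hom_aux hfg β hβadd z hβzne
  set d := θ z with hd
  haveI : NeZero d.natAbs := ⟨Int.natAbs_ne_zero.mpr hθz⟩
  set ρ : G →* Multiplicative (ZMod d.natAbs) :=
    MonoidHom.mk' (fun g => Multiplicative.ofAdd ((θ g : ZMod d.natAbs)))
      (by intro a b; rw [hθadd]; push_cast; rw [ofAdd_add]) with hρ
  set K := ρ.ker with hK
  haveI hKfi : K.FiniteIndex := Subgroup.finiteIndex_ker ρ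
  have hmemK : ∀ w : G, w ∈ K ↔ d ∣ θ w := by
    intro w
    rw [hK, MonoidHom.mem_ker]
    show Multiplicative.ofAdd ((θ w : ZMod d.natAbs)) = 1 ↔ _
    rw [ofAdd_eq_one, ZMod.intCast_zmod_eq_zero_iff_dvd, Int.natAbs_dvd]
  have hzK : z ∈ K := (hmemK z).mpr dvd_rfl
  set φ : K →* Multiplicative ℤ :=
    MonoidHom.mk' (fun k => Multiplicative.ofAdd (-(θ (k : G) / d)))
      (by
        rintro a b
        obtain ⟨u, hu⟩ := (hmemK _).mp a.2
        obtain ⟨v, hv⟩ := (hmemK _).mp b.2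
        show Multiplicative.ofAdd (-(θ ((a : G) * b) / d)) =
          Multiplicative.ofAdd (-(θ (a : G) / d)) * Multiplicative.ofAdd (-(θ (b : G) / d))
        rw [hθadd, hu, hv, ← mul_add, Int.mul_ediv_cancel_left _ hθz,
          Int.mul_ediv_cancel_left _ hθz, Int.mul_ediv_cancel_left _ hθz, neg_add, ofAdd_add]) with hφ
  have hφz : φ ⟨z, hzK⟩ = Multiplicative.ofAdd (-1) := by
    show Multiplicative.ofAdd (-(d / d)) = Multiplicative.ofAdd (-1)
    rw [Int.ediv_self hθz]
  have hcent : ∀ k : K, k * ⟨z, hzK⟩ = ⟨z, hzK⟩ * k := fun k => Subtype.ext (hz k)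
  exact ⟨K, hzK, hKfi, φ, hφz, split_lemma_aux ⟨z, hzK⟩ hcent φ hφz⟩
end

section
/- Let D be a cube [0,1]^d with the ℓ^p metric (p ∈ (1,∞)), and consider the product space D × Y with the ℓ^p product metric, where Y is a geodesic metric space. Let x, y, z be points with projections x_D, y_D, z_D ∈ D, and suppose γ is the concatenation of the constant-speed affine path from x to z and from z to y (with z in the 'slice' D, meaning π_Y(z) = v is fixed). Then the projection π_D∘γ (parametrized proportionally to arc length of γ) is a constant-speed geodesic of D if and only if (x_D − z_D)/d(x,z) + (y_D − z_D)/d(y,z) = 0 (the zero-tension condition), where d is the ambient ℓ^p product metric. -/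
/-- The `ℓ^p` norm on `ℝⁿ` for a real exponent `p`. -/
noncomputable def lpN (p : ℝ) {n : ℕ} (v : Fin n → ℝ) : ℝ :=
  (∑ i, |v i| ^ p) ^ (1/p)

lemma sum_nn (p : ℝ) {n : ℕ} (v : Fin n → ℝ) : 0 ≤ ∑ i, |v i| ^ p :=
  Finset.sum_nonneg fun i _ => Real.rpow_nonneg (abs_nonneg _) _

lemma lpN_nonneg (p : ℝ) {n : ℕ} (v : Fin n → ℝ) : 0 ≤ lpN p v :=
  Real.rpow_nonneg (sum_nn p v) _

lemma lpN_pow {p : ℝ} (hp : 0 < p) {n : ℕ} (v : Fin n → ℝ) :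
    lpN p v ^ p = ∑ i, |v i| ^ p := by
  rw [lpN, ← Real.rpow_mul (sum_nn p v), one_div, inv_mul_cancel₀ hp.ne', Real.rpow_one]

lemma lpN_eq_zero_iff {p : ℝ} (hp : 0 < p) {n : ℕ} {v : Fin n → ℝ} :
    lpN p v = 0 ↔ v = 0 := by
  constructor
  · intro h
    have hs : ∑ i, |v i| ^ p = 0 := by
      rw [← lpN_pow hp v, h, Real.zero_rpow hp.ne']
    have := (Finset.sum_eq_zero_iff_of_nonneg
      (fun i _ => Real.rpow_nonneg (abs_nonneg _) p)).1 hs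
    funext i
    have hi := this i (Finset.mem_univ i)
    have : |v i| = 0 := by
      by_contra h0
      exact (Real.rpow_pos_of_pos (lt_of_le_of_ne (abs_nonneg _) (Ne.symm h0)) p).ne' hi
    simpa using abs_eq_zero.1 this
  · rintro rfl
    simp [lpN, Real.zero_rpow hp.ne']
    rw [Real.zero_rpow (inv_ne_zero hp.ne')]

lemma lpN_smul {p : ℝ} (hp : 0 < p) {n : ℕ} (c : ℝ) (v : Fin n → ℝ) :
    lpN p (c • v) = |c| * lpN p v := by
  have h1 : ∀ i, |(c • v) i| ^ p = |c| ^ p * |v i| ^ p := by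
    intro i
    rw [Pi.smul_apply, smul_eq_mul, abs_mul, Real.mul_rpow (abs_nonneg _) (abs_nonneg _)]
  rw [lpN, Finset.sum_congr rfl (fun i _ => h1 i), ← Finset.mul_sum,
    Real.mul_rpow (Real.rpow_nonneg (abs_nonneg _) _) (sum_nn p v),
    ← Real.rpow_mul (abs_nonneg _), one_div, mul_inv_cancel₀ hp.ne', Real.rpow_one, lpN, one_div]

lemma lpN_neg (p : ℝ) {n : ℕ} (v : Fin n → ℝ) : lpN p (-v) = lpN p v := by
  simp [lpN, abs_neg]

lemma mid_le {p : ℝ} (hp : 1 < p) (x y : ℝ) :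
    |(x + y)/2| ^ p ≤ (|x| ^ p + |y| ^ p) / 2 := by
  have h0 : (0:ℝ) < p := lt_trans one_pos hp
  have h1 : |(x + y)/2| ≤ (|x| + |y|)/2 := by
    rw [abs_div, abs_two]; exact div_le_div_of_nonneg_right (abs_add_le x y) (by norm_num)
  have h2 : |(x + y)/2| ^ p ≤ ((|x| + |y|)/2) ^ p :=
    Real.rpow_le_rpow (abs_nonneg _) h1 h0.le
  refine h2.trans ?_
  have := (convexOn_rpow hp.le).2 (Set.mem_Ici.2 (abs_nonneg x)) (Set.mem_Ici.2 (abs_nonneg y))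
    (by norm_num : (0:ℝ) ≤ 1/2) (by norm_num : (0:ℝ) ≤ 1/2) (by norm_num)
  simp only [smul_eq_mul] at this
  calc ((|x| + |y|)/2) ^ p = (1/2 * |x| + 1/2 * |y|) ^ p := by ring_nf
    _ ≤ 1/2 * |x| ^ p + 1/2 * |y| ^ p := this
    _ = (|x| ^ p + |y| ^ p) / 2 := by ring

lemma mid_eq {p : ℝ} (hp : 1 < p) {x y : ℝ}
    (h : |(x + y)/2| ^ p = (|x| ^ p + |y| ^ p) / 2) : x = y := by
  have h0 : (0:ℝ) < p := lt_trans one_pos hp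
  by_contra hxy
  rcases eq_or_ne |x| |y| with hax | hax
  · have hyx : y = -x := by
      rcases abs_eq_abs.1 hax with h1 | h1
      · exact absurd h1 hxy
      · linarith
    subst hyx
    have hx0 : x ≠ 0 := by rintro rfl; exact hxy (by norm_num)
    rw [add_neg_cancel] at h
    simp only [zero_div, abs_zero, Real.zero_rpow h0.ne', abs_neg] at h
    have : 0 < |x| ^ p := Real.rpow_pos_of_pos (abs_pos.2 hx0) p
    linarith
  · have hstrict := (strictConvexOn_rpow hp).2 (Set.mem_Ici.2 (abs_nonneg x))
      (Set.mem_Ici.2 (abs_nonneg y)) hax (by norm_num : (0:ℝ) < 1/2)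
      (by norm_num : (0:ℝ) < 1/2) (by norm_num)
    simp only [smul_eq_mul] at hstrict
    have h1 : |(x + y)/2| ≤ (|x| + |y|)/2 := by
      rw [abs_div, abs_two]; exact div_le_div_of_nonneg_right (abs_add_le x y) (by norm_num)
    have h2 : |(x + y)/2| ^ p ≤ ((|x| + |y|)/2) ^ p :=
      Real.rpow_le_rpow (abs_nonneg _) h1 h0.le
    have h3 : ((|x| + |y|)/2) ^ p = (1/2 * |x| + 1/2 * |y|) ^ p := by ring_nf
    rw [h, h3] at h2
    linarith

lemma lpN_parallel {p : ℝ} (hp : 1 < p) {n : ℕ} {u w : Fin n → ℝ}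
    (hu : lpN p u = 1) (hw : lpN p w = 1) (huw : lpN p (u + w) = 2) : u = w := by
  have hp0 : (0:ℝ) < p := lt_trans one_pos hp
  have hsu : ∑ i, |u i| ^ p = 1 := by rw [← lpN_pow hp0 u, hu, Real.one_rpow]
  have hsw : ∑ i, |w i| ^ p = 1 := by rw [← lpN_pow hp0 w, hw, Real.one_rpow]
  have hmid : lpN p ((2:ℝ)⁻¹ • (u + w)) = 1 := by
    rw [lpN_smul hp0, huw, abs_of_pos (by norm_num : (0:ℝ) < 2⁻¹)]
    norm_num
  have hsm : ∑ i, |(u i + w i)/2| ^ p = 1 := by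
    have h1 := lpN_pow hp0 ((2:ℝ)⁻¹ • (u + w))
    rw [hmid, Real.one_rpow] at h1
    rw [h1]
    refine Finset.sum_congr rfl fun i _ => ?_
    congr 1
    simp [Pi.smul_apply, Pi.add_apply, smul_eq_mul]
    ring_nf
    rw [← add_mul, abs_mul, abs_of_pos (by norm_num : (0:ℝ) < 1/2)]
  have hsum_eq : ∑ i, |(u i + w i)/2| ^ p = ∑ i, (|u i| ^ p + |w i| ^ p)/2 := by
    rw [hsm]
    rw [← Finset.sum_div, Finset.sum_add_distrib, hsu, hsw]
    norm_num
  have key := (Finset.sum_eq_sum_iff_of_le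
    (fun i _ => mid_le hp (u i) (w i))).1 hsum_eq
  funext i
  exact mid_eq hp (key i (Finset.mem_univ i))

set_option maxHeartbeats 2000000 in
theorem stmt_17 (p : ℝ) (hp : 1 < p) (d : ℕ) {Y : Type*} [MetricSpace Y]
    (xD zD yD : Fin d → ℝ) (xY yY v : Y) :
    let dxz : ℝ := (lpN p (xD - zD) ^ p + dist xY v ^ p) ^ (1/p)
    let dzy : ℝ := (lpN p (yD - zD) ^ p + dist v yY ^ p) ^ (1/p)
    let s : ℝ := dxz / (dxz + dzy)
    let γD : ℝ → Fin d → ℝ := fun t =>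
      if t ≤ s then xD + (t / s) • (zD - xD) else zD + ((t - s) / (1 - s)) • (yD - zD)
    0 < dxz → 0 < dzy →
    ((∀ s' ∈ Set.Icc (0:ℝ) 1, ∀ t' ∈ Set.Icc (0:ℝ) 1,
        lpN p (γD s' - γD t') = |s' - t'| * lpN p (xD - yD)) ↔
      dxz⁻¹ • (xD - zD) + dzy⁻¹ • (yD - zD) = 0) := by
  intro dxz dzy s γD hdxz hdzy
  have hp0 : (0:ℝ) < p := lt_trans one_pos hp
  have hss : s = dxz / (dxz + dzy) := rfl
  have hγ : ∀ t, γD t =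
      if t ≤ s then xD + (t / s) • (zD - xD) else zD + ((t - s) / (1 - s)) • (yD - zD) :=
    fun t => rfl
  have hsumpos : 0 < dxz + dzy := by linarith
  have hs0 : 0 < s := div_pos hdxz hsumpos
  have hs1 : s < 1 := by rw [hss]; rw [div_lt_one hsumpos]; linarith
  have hsne : s ≠ 0 := hs0.ne'
  have h1sne : (1:ℝ) - s ≠ 0 := by linarith
  clear_value dxz dzy s γD
  set a : Fin d → ℝ := xD - zD with ha
  set b : Fin d → ℝ := yD - zD with hb
  clear_value a b
  have ha' : ∀ i, a i = xD i - zD i := fun i => by rw [ha]; rfl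
  have hb' : ∀ i, b i = yD i - zD i := fun i => by rw [hb]; rfl
  set A : ℝ := lpN p a with hAdef
  set B : ℝ := lpN p b with hBdef
  set L : ℝ := lpN p (xD - yD) with hLdef
  clear_value A B L
  have hγ0 : γD 0 = xD := by
    rw [hγ, if_pos hs0.le, zero_div, zero_smul, add_zero]
  have hγs : γD s = zD := by
    rw [hγ, if_pos le_rfl, div_self hsne, one_smul]
    funext i; simp
  have hγ1 : γD 1 = yD := by
    rw [hγ, if_neg (not_le.2 hs1), div_self h1sne, one_smul]
    funext i; simp [hb]
  constructor
  · intro h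
    have h1 := h 0 (Set.mem_Icc.2 ⟨le_rfl, zero_le_one⟩) s (Set.mem_Icc.2 ⟨hs0.le, hs1.le⟩)
    rw [hγ0, hγs] at h1
    have hA : A = s * L := by
      rw [hAdef, ha]
      rw [h1, zero_sub, abs_neg, abs_of_pos hs0]
    have h2 := h s (Set.mem_Icc.2 ⟨hs0.le, hs1.le⟩) 1 (Set.mem_Icc.2 ⟨zero_le_one, le_rfl⟩)
    rw [hγs, hγ1] at h2
    have hzy : zD - yD = -b := by funext i; simp [hb]
    rw [hzy, lpN_neg] at h2
    have hB : B = (1 - s) * L := by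
      rw [hBdef, h2, abs_of_neg (by linarith : s - 1 < 0)]; ring
    by_cases hA0 : A = 0
    · -- degenerate case: everything is zero
      have hL0 : L = 0 := by
        have : s * L = 0 := by rw [← hA, hA0]
        rcases mul_eq_zero.1 this with h' | h'
        · exact absurd h' hsne
        · exact h'
      have hB0 : B = 0 := by rw [hB, hL0, mul_zero]
      have ha0 : a = 0 := (lpN_eq_zero_iff hp0).1 (by rw [← hAdef]; exact hA0)
      have hb0 : b = 0 := (lpN_eq_zero_iff hp0).1 (by rw [← hBdef]; exact hB0)
      rw [ha0, hb0]; simp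
    · have hApos : 0 < A := lt_of_le_of_ne (by rw [hAdef]; exact lpN_nonneg p a) (Ne.symm hA0)
      have hL0 : (0:ℝ) ≤ L := by rw [hLdef]; exact lpN_nonneg p _
      have hLpos : 0 < L := by
        rcases hL0.lt_or_eq with h' | h'
        · exact h'
        · exfalso; rw [hA, ← h', mul_zero] at hApos; exact lt_irrefl 0 hApos
      have hBpos : 0 < B := by rw [hB]; exact mul_pos (by linarith) hLpos
      have hABpos : 0 < A + B := by linarith
      set c : ℝ := A / (A + B) with hc
      have hc0 : 0 < c := div_pos hApos hABpos
      have hc1 : c < 1 := by rw [hc, div_lt_one hABpos]; linarith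
      set s' : ℝ := s * c with hs'
      set t' : ℝ := s + (1 - s) * c with ht'
      have hs'mem : s' ∈ Set.Icc (0:ℝ) 1 := by
        constructor
        · positivity
        · nlinarith
      have ht'mem : t' ∈ Set.Icc (0:ℝ) 1 := by
        constructor
        · nlinarith
        · nlinarith
      have h3 := h s' hs'mem t' ht'mem
      have hγs' : γD s' = xD + c • (zD - xD) := by
        rw [hγ, if_pos (by nlinarith : s' ≤ s)]
        rw [hs', mul_comm s c, mul_div_assoc, div_self hsne, mul_one]
      have hγt' : γD t' = zD + c • b := by
        rw [hγ, if_neg (by nlinarith : ¬ t' ≤ s)]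
        rw [ht', add_sub_cancel_left, mul_comm (1-s) c, mul_div_assoc, div_self h1sne, mul_one]
      set u : Fin d → ℝ := A⁻¹ • a with hu
      set w : Fin d → ℝ := B⁻¹ • (-b) with hw
      clear_value c s' t' u w
      have hvec : γD s' - γD t' = (A * B / (A + B)) • (u + w) := by
        rw [hγs', hγt']
        funext i
        simp only [hu, hw, ha, hb, hc, Pi.sub_apply, Pi.add_apply, Pi.smul_apply, Pi.neg_apply,
          smul_eq_mul]
        field_simp
        ring
      have habs : |s' - t'| * L = (1 - c) * A + c * B := by
        have hd : t' - s' = s * (1 - c) + (1 - s) * c := by rw [ht', hs']; ring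
        rw [abs_sub_comm, abs_of_pos (by nlinarith : (0:ℝ) < t' - s'), hd, hA, hB]
        ring
      rw [hvec, lpN_smul hp0, abs_of_pos (by positivity : (0:ℝ) < A * B / (A + B)),
        habs] at h3
      have hq : (1 - c) * A + c * B = A * B / (A + B) * 2 := by
        rw [hc]; field_simp; ring
      rw [hq] at h3
      have huw2 : lpN p (u + w) = 2 := by
        have := mul_left_cancel₀ (by positivity : A * B / (A + B) ≠ 0) h3
        linarith
      have hu1 : lpN p u = 1 := by
        rw [hu, lpN_smul hp0, abs_of_pos (inv_pos.2 hApos), ← hAdef, inv_mul_cancel₀ hApos.ne']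
      have hw1 : lpN p w = 1 := by
        rw [hw, lpN_smul hp0, lpN_neg, abs_of_pos (inv_pos.2 hBpos), ← hBdef,
          inv_mul_cancel₀ hBpos.ne']
      have heq : u = w := lpN_parallel hp hu1 hw1 huw2
      -- now conclude
      have hAB : dzy * A = dxz * B := by
        rw [hA, hB, hss]; field_simp; ring
      funext i
      have hi := congrFun heq i
      simp only [hu, hw, Pi.smul_apply, Pi.neg_apply, smul_eq_mul] at hi
      simp only [Pi.add_apply, Pi.smul_apply, Pi.zero_apply, smul_eq_mul]
      have hbi : a i = -(A / B) * b i := by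
        field_simp at hi ⊢
        linear_combination hi
      rw [hbi]
      field_simp
      linear_combination (-(b i)) * hAB
  · intro h s' _ t' _
    -- from h : dxz⁻¹ • a + dzy⁻¹ • b = 0
    have hbi : ∀ i, b i = -((1 - s) / s) * a i := by
      intro i
      have hi := congrFun h i
      simp only [Pi.add_apply, Pi.smul_apply, Pi.zero_apply, smul_eq_mul] at hi
      have hrat : (1 - s) / s = dzy / dxz := by
        rw [hss]; field_simp
        ring
      rw [hrat]
      field_simp at hi ⊢
      linear_combination hi
    have hγ' : ∀ t, γD t = zD + ((s - t) / s) • a := by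
      intro t
      rw [hγ]
      split_ifs with htle
      · funext i
        simp only [Pi.add_apply, Pi.smul_apply, Pi.sub_apply, smul_eq_mul, ha']
        field_simp
        ring
      · funext i
        simp only [Pi.add_apply, Pi.smul_apply, Pi.sub_apply, smul_eq_mul]
        rw [hbi i]
        field_simp
        ring
    have hdiff : γD s' - γD t' = ((t' - s') / s) • a := by
      rw [hγ' s', hγ' t']
      funext i
      simp only [Pi.sub_apply, Pi.add_apply, Pi.smul_apply, smul_eq_mul]
      field_simp
      ring
    have hxy : xD - yD = s⁻¹ • a := by
      funext i
      simp only [Pi.sub_apply, Pi.smul_apply, smul_eq_mul]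
      have hxyi : xD i - yD i = a i - b i := by rw [ha' i, hb' i]; ring
      rw [hxyi, hbi i]
      field_simp
      ring
    rw [hdiff, lpN_smul hp0, hLdef, hxy, lpN_smul hp0]
    rw [abs_div, abs_inv, abs_of_pos hs0, abs_sub_comm s' t']
    ring
end
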